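/- Let G be a locally compact compactly generated Hausdorff group with Cayley graph Γ determined by a compact symmetric generating neighborhood F of 1. For A ⊆ G let |∂_Γ A| = (A·F) ∩ ((G \ A)·F). Then {A ⊆ G | |∂_Γ A| is bounded} = U^G, where U^G = {A ⊆ G | ∂A is compact and (A·K) Δ A is bounded for every nonempty compact K ⊆ G}. -/

import Mathlib

open Set Pointwise

/-- A subset of `G` is bounded if it is contained in a compact set. -/
def Bdd {G : Type*} [TopologicalSpace G] (A : Set G) : Prop :=
  ∃ K : Set G, IsCompact K ∧ A ⊆ K

/-- `U^G`: subsets of `G` with compact topological boundary such that `(A·K) Δ A` is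
bounded for every nonempty compact `K ⊆ G`. -/
def UG (G : Type*) [Group G] [TopologicalSpace G] : Set (Set G) :=
  {A | IsCompact (frontier A) ∧
    ∀ K : Set G, K.Nonempty → IsCompact K → Bdd (symmDiff (A * K) A)}

/-- Key path lemma: anything in `A * F ^ n` but not in `A` is reachable from the Cayley
boundary `(A * F) ∩ (Aᶜ * F)` in at most `n` steps. -/
lemma cayley_path_lemma {G : Type*} [Group G] (A F : Set G) (h1 : (1:G) ∈ F) :
    ∀ n, (A * F ^ n) \ A ⊆ ((A * F) ∩ (Aᶜ * F)) * F ^ n := by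
  intro n
  induction n with
  | zero => simp
  | succ n ih =>
    rintro x ⟨hx1, hx2⟩
    rw [pow_succ, ← mul_assoc] at hx1
    obtain ⟨y, hy, f, hf, rfl⟩ := hx1
    by_cases hyA : y ∈ A
    · have hb : y * f ∈ (A * F) ∩ (Aᶜ * F) :=
        ⟨mul_mem_mul hyA hf, by simpa using mul_mem_mul (show y * f ∈ Aᶜ from hx2) h1⟩
      simpa using mul_mem_mul hb (one_mem_pow h1 (n := n + 1))
    · have := ih ⟨hy, hyA⟩
      rw [pow_succ, ← mul_assoc]
      exact mul_mem_mul this hf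

/-- A compact set is contained in some power of a generating neighborhood of `1`. -/
lemma compact_subset_pow {G : Type*} [Group G] [TopologicalSpace G] [IsTopologicalGroup G]
    (F K : Set G) (h1 : (1:G) ∈ F) (hF1 : F ∈ nhds (1 : G))
    (hFgen : ∀ g : G, ∃ n : ℕ, g ∈ F ^ n) (hK : IsCompact K) : ∃ n, K ⊆ F ^ n := by
  have hcov : K ⊆ ⋃ n : ℕ, interior (F ^ (n + 1)) := by
    intro g _
    obtain ⟨m, hm⟩ := hFgen g
    have hsub : g • interior F ⊆ F ^ (m + 1) := by
      rintro _ ⟨w, hw, rfl⟩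
      rw [pow_succ]
      exact mul_mem_mul hm (interior_subset hw)
    have : g ∈ interior (F ^ (m + 1)) :=
      interior_maximal hsub (isOpen_interior.smul g)
        ⟨1, mem_interior_iff_mem_nhds.mpr hF1, mul_one g⟩
    exact mem_iUnion.mpr ⟨m, this⟩
  obtain ⟨t, ht⟩ := hK.elim_finite_subcover _ (fun n => isOpen_interior) hcov
  refine ⟨t.sup id + 1, fun g hg => ?_⟩
  obtain ⟨n, hn, hgn⟩ := mem_iUnion₂.mp (ht hg)
  exact pow_subset_pow_right h1 (Nat.succ_le_succ (Finset.le_sup (f := id) hn))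
    (interior_subset hgn)

/-- The closure of `A` is contained in `A * F` for a symmetric neighborhood `F` of `1`. -/
lemma closure_subset_mul {G : Type*} [Group G] [TopologicalSpace G] [IsTopologicalGroup G]
    (A F : Set G) (hF1 : F ∈ nhds (1 : G)) (hFsymm : F⁻¹ = F) :
    closure A ⊆ A * F := by
  intro x hx
  have hnb : x • F ∈ nhds x := by simpa using smul_mem_nhds_smul x hF1
  obtain ⟨a, haF, haA⟩ := mem_closure_iff_nhds.mp hx _ hnb
  obtain ⟨f, hf, rfl⟩ := haF
  refine ⟨x * f, haA, f⁻¹, ?_, by group⟩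
  rw [← hFsymm]; exact inv_mem_inv.mpr hf

/-- The sets with bounded Cayley-graph boundary `|∂_Γ A| = (A·F) ∩ ((G \ A)·F)` are exactly
the sets in `U^G`. -/
theorem cayleyBoundary_bounded_iff_UG {G : Type*}
    [Group G] [TopologicalSpace G] [IsTopologicalGroup G] [LocallyCompactSpace G] [T2Space G]
    (F : Set G) (hFc : IsCompact F) (hF1 : F ∈ nhds (1 : G)) (hFsymm : F⁻¹ = F)
    (hFgen : ∀ g : G, ∃ n : ℕ, g ∈ F ^ n) :
    {A : Set G | Bdd ((A * F) ∩ (Aᶜ * F))} = UG G := by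
  have h1F : (1:G) ∈ F := mem_of_mem_nhds hF1
  have hFpow : ∀ n, IsCompact (F ^ n) := by
    intro n
    induction n with
    | zero => rw [pow_zero, ← Set.singleton_one]; exact isCompact_singleton
    | succ n ih => rw [pow_succ]; exact ih.mul hFc
  ext A
  simp only [mem_setOf_eq, UG]
  constructor
  · rintro ⟨C, hC, hBC⟩
    constructor
    · -- frontier A is compact
      refine hC.of_isClosed_subset isClosed_frontier fun x hx => ?_
      refine hBC ⟨closure_subset_mul A F hF1 hFsymm (frontier_subset_closure hx), ?_⟩
      refine closure_subset_mul Aᶜ F hF1 hFsymm (frontier_subset_closure ?_)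
      rwa [frontier_compl]
    · rintro K ⟨k, hk⟩ hKc
      obtain ⟨n, hKF⟩ := compact_subset_pow F K h1F hF1 hFgen hKc
      refine ⟨C * F ^ n, hC.mul (hFpow n), ?_⟩
      rw [Set.symmDiff_def]
      apply union_subset
      · intro x hx
        have hx' : x ∈ (A * F ^ n) \ A :=
          ⟨mul_subset_mul_left hKF hx.1, hx.2⟩
        exact mul_subset_mul_right hBC (cayley_path_lemma A F h1F n hx')
      · intro a ha
        obtain ⟨haA, hna⟩ := ha
        have h1 : a * k⁻¹ ∈ Aᶜ := fun hmem => hna ⟨a * k⁻¹, hmem, k, hk, by group⟩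
        have h2 : a ∈ (Aᶜ * F ^ n) \ Aᶜ :=
          ⟨⟨a * k⁻¹, h1, k, hKF hk, by group⟩, not_not_intro haA⟩
        have h3 := cayley_path_lemma Aᶜ F h1F n h2
        rw [compl_compl, inter_comm] at h3
        exact mul_subset_mul_right hBC h3
  · rintro ⟨-, hA⟩
    obtain ⟨D, hD, hsub⟩ := hA F ⟨1, h1F⟩ hFc
    have hdiff : (A * F) \ A ⊆ D := fun x hx =>
      hsub (Set.mem_symmDiff.mpr (Or.inl ⟨hx.1, hx.2⟩))
    refine ⟨D ∪ D * F, hD.union (hD.mul hFc), ?_⟩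
    rintro x ⟨hx1, hx2⟩
    by_cases hxA : x ∈ A
    · obtain ⟨y, hy, f, hf, rfl⟩ := hx2
      have hymem : y ∈ (A * F) \ A :=
        ⟨⟨y * f, hxA, f⁻¹, by rw [← hFsymm]; exact inv_mem_inv.mpr hf, by group⟩, hy⟩
      exact Or.inr (mul_mem_mul (hdiff hymem) hf)
    · exact Or.inl (hdiff ⟨hx1, hxA⟩)
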